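/- Let G1 be a cubic graph that is not 3-edge-colorable, let e1 = a1b1 and e2 = a2b2 be two disjoint (non-adjacent) edges of G1, and let G2 be a cubic graph that is not 3-edge-colorable with an edge xy; let c1, c2 (resp. d1, d2) be the other two neighbors of x (resp. y) in G2. Form the dot product G = G1 · G2 by deleting e1, e2 from G1, deleting x and y from G2, and adding the edges a1c1, b1c2, a2d1, b2d2. Then G is a cubic graph that is not 3-edge-colorable. -/

import Mathlib

/-- A proper 3-edge-coloring of a graph: distinct edges sharing a vertex get distinct colors. -/
def IsProper3EdgeColoring {V : Type*} (G : SimpleGraph V) (c : Sym2 V → Fin 3) : Prop :=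
  ∀ e ∈ G.edgeSet, ∀ f ∈ G.edgeSet, e ≠ f → (∃ v, v ∈ e ∧ v ∈ f) → c e ≠ c f

lemma edge_rep {V : Type*} {G : SimpleGraph V} {e : Sym2 V} {v : V}
    (he : e ∈ G.edgeSet) (hv : v ∈ e) : ∃ w, G.Adj v w ∧ e = s(v, w) := by
  induction e with
  | _ a b =>
    rcases Sym2.mem_iff.1 hv with rfl | rfl
    · exact ⟨b, he, rfl⟩
    · exact ⟨a, (G.mem_edgeSet.1 he).symm, Sym2.eq_swap⟩

lemma even_card_of_invol {α : Type*} [DecidableEq α] (f : α → α) :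
    ∀ (n : ℕ) (s : Finset α), s.card = n →
    (∀ a ∈ s, f a ∈ s) → (∀ a ∈ s, f (f a) = a) → (∀ a ∈ s, f a ≠ a) →
    Even s.card := by
  intro n
  induction n using Nat.strong_induction_on with
  | _ n ih =>
    intro s hcard hmem hinv hne
    rcases s.eq_empty_or_nonempty with rfl | ⟨a, ha⟩
    · simp
    · have hfa : f a ∈ s := hmem a ha
      have hane : f a ≠ a := hne a ha
      set t := s \ {a, f a} with ht
      have hsub : ({a, f a} : Finset α) ⊆ s := by
        intro z hz; rcases Finset.mem_insert.1 hz with rfl | hz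
        · exact ha
        · rw [Finset.mem_singleton.1 hz]; exact hfa
      have hc2 : ({a, f a} : Finset α).card = 2 := by
        rw [Finset.card_insert_of_notMem (by simp [Ne.symm hane]), Finset.card_singleton]
      have htcard : t.card = s.card - 2 := by
        rw [ht, Finset.card_sdiff_of_subset hsub, hc2]
      have hpos : 1 ≤ s.card := Finset.card_pos.2 ⟨a, ha⟩
      have h2 : 2 ≤ s.card := by
        have := Finset.card_le_card hsub; omega
      have htmem : ∀ b ∈ t, f b ∈ t := by
        intro b hb
        rcases Finset.mem_sdiff.1 hb with ⟨hbs, hbn⟩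
        simp only [Finset.mem_insert, Finset.mem_singleton, not_or] at hbn
        refine Finset.mem_sdiff.2 ⟨hmem b hbs, ?_⟩
        simp only [Finset.mem_insert, Finset.mem_singleton, not_or]
        constructor
        · intro h; exact hbn.2 (by rw [← h, hinv b hbs])
        · intro h
          have := congrArg f h
          rw [hinv b hbs, hinv a ha] at this
          exact hbn.1 this
      have htinv : ∀ b ∈ t, f (f b) = b := fun b hb => hinv b (Finset.mem_sdiff.1 hb).1
      have htne : ∀ b ∈ t, f b ≠ b := fun b hb => hne b (Finset.mem_sdiff.1 hb).1
      have hev : Even t.card := ih t.card (by omega) t rfl htmem htinv htne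
      have : s.card = t.card + 2 := by omega
      rw [this]
      exact hev.add (by norm_num)

lemma fin3_parity (α β γ δ : Fin 3)
    (h : ∀ i j : Fin 3,
      ((if α=i then 1 else 0)+(if β=i then 1 else 0)+(if γ=i then 1 else 0)+(if δ=i then 1 else 0)) % 2
      = ((if α=j then 1 else 0)+(if β=j then 1 else 0)+(if γ=j then 1 else 0)+(if δ=j then 1 else 0)) % 2)
    (hne : ¬(α = β ∧ γ = δ)) :
    α ≠ β ∧ γ ≠ δ ∧ ((α = γ ∧ β = δ) ∨ (α = δ ∧ β = γ)) := by
  revert h hne; revert α β γ δ; decide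

lemma fin3_third (α β : Fin 3) (h : α ≠ β) : -(α+β) ≠ α ∧ -(α+β) ≠ β := by
  revert h; revert α β; decide

lemma exists_unique_color_nbr {V : Type*} [Fintype V] (G : SimpleGraph V) (c : Sym2 V → Fin 3)
    (hc : IsProper3EdgeColoring G c) (w : V) (hdeg : (G.neighborSet w).ncard = 3) (i : Fin 3) :
    ∃! u, G.Adj w u ∧ c s(w, u) = i := by
  classical
  have hfin : (G.neighborSet w).Finite := Set.toFinite _
  haveI := hfin.fintype
  have hcard : Fintype.card (G.neighborSet w) = 3 := by
    rw [← Nat.card_coe_set_eq, Nat.card_eq_fintype_card] at hdeg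
    exact hdeg
  let m : G.neighborSet w → Fin 3 := fun u => c s(w, u.1)
  have hinj : Function.Injective m := by
    intro u u' h
    by_contra hne
    have hne' : u.1 ≠ u'.1 := fun h' => hne (Subtype.ext h')
    have hedge : s(w, u.1) ≠ s(w, u'.1) := fun h' => hne' ((Sym2.congr_right).1 h')
    exact hc _ (G.mem_edgeSet.2 u.2) _ (G.mem_edgeSet.2 u'.2) hedge
      ⟨w, Sym2.mem_mk_left _ _, Sym2.mem_mk_left _ _⟩ h
  have hsurj : Function.Surjective m := by
    have : Function.Bijective m := (Fintype.bijective_iff_injective_and_card m).2 ⟨hinj, by simp [hcard]⟩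
    exact this.2
  obtain ⟨u, hu⟩ := hsurj i
  refine ⟨u.1, ⟨u.2, hu⟩, ?_⟩
  intro z ⟨hz1, hz2⟩
  have : m ⟨z, hz1⟩ = m u := by show c s(w, z) = m u; rw [hz2, hu]
  exact congrArg Subtype.val (hinj this)

/-- The dot product of two non-3-edge-colorable cubic graphs is a non-3-edge-colorable
cubic graph.  `G1` has two disjoint edges `a1b1`, `a2b2`; `G2` has an edge `xy` where
the other neighbors of `x` are `c1, c2` and the other neighbors of `y` are `d1, d2`.
The dot product `G` is built on `V1 ⊕ (V2 \ {x,y})` by deleting `a1b1`, `a2b2` from `G1`,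
deleting `x`, `y` from `G2`, and adding the edges `a1c1`, `b1c2`, `a2d1`, `b2d2`. -/
theorem dot_product_not_three_edge_colorable
    {V1 V2 : Type*} [Fintype V1] [Fintype V2]
    (G1 : SimpleGraph V1) (G2 : SimpleGraph V2)
    (h1cubic : ∀ v, (G1.neighborSet v).ncard = 3)
    (h2cubic : ∀ v, (G2.neighborSet v).ncard = 3)
    (h1nc : ¬ ∃ c, IsProper3EdgeColoring G1 c)
    (h2nc : ¬ ∃ c, IsProper3EdgeColoring G2 c)
    (a1 b1 a2 b2 : V1) (he1 : G1.Adj a1 b1) (he2 : G1.Adj a2 b2)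
    (hdisj : a1 ≠ a2 ∧ a1 ≠ b2 ∧ b1 ≠ a2 ∧ b1 ≠ b2)
    (x y c1 c2 d1 d2 : V2)
    (hxy : G2.Adj x y)
    (hxc1 : G2.Adj x c1) (hxc2 : G2.Adj x c2)
    (hc12 : c1 ≠ c2) (hc1y : c1 ≠ y) (hc2y : c2 ≠ y)
    (hxnbr : ∀ v, G2.Adj x v → v = y ∨ v = c1 ∨ v = c2)
    (hyd1 : G2.Adj y d1) (hyd2 : G2.Adj y d2)
    (hd12 : d1 ≠ d2) (hd1x : d1 ≠ x) (hd2x : d2 ≠ x)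
    (hynbr : ∀ v, G2.Adj y v → v = x ∨ v = d1 ∨ v = d2) :
    ∀ G : SimpleGraph (V1 ⊕ {v : V2 // v ≠ x ∧ v ≠ y}),
      G = SimpleGraph.fromRel (fun p q =>
        (∃ s t : V1, p = Sum.inl s ∧ q = Sum.inl t ∧ G1.Adj s t ∧
          s(s, t) ≠ s(a1, b1) ∧ s(s, t) ≠ s(a2, b2)) ∨
        (∃ s t : {v : V2 // v ≠ x ∧ v ≠ y}, p = Sum.inr s ∧ q = Sum.inr t ∧
          G2.Adj s.1 t.1) ∨
        (∃ t : {v : V2 // v ≠ x ∧ v ≠ y}, q = Sum.inr t ∧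
          ((p = Sum.inl a1 ∧ t.1 = c1) ∨ (p = Sum.inl b1 ∧ t.1 = c2) ∨
           (p = Sum.inl a2 ∧ t.1 = d1) ∨ (p = Sum.inl b2 ∧ t.1 = d2)))) →
      (∀ w, (G.neighborSet w).ncard = 3) ∧ ¬ ∃ c, IsProper3EdgeColoring G c := by
  classical
  intro G hG
  obtain ⟨hd12', hd12'', hd21', hd22'⟩ := hdisj
  have hab1 : a1 ≠ b1 := he1.ne
  have hab2 : a2 ≠ b2 := he2.ne
  have hadj : ∀ p q, G.Adj p q ↔ p ≠ q ∧
      (((∃ s t : V1, p = Sum.inl s ∧ q = Sum.inl t ∧ G1.Adj s t ∧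
          s(s, t) ≠ s(a1, b1) ∧ s(s, t) ≠ s(a2, b2)) ∨
        (∃ s t : {v : V2 // v ≠ x ∧ v ≠ y}, p = Sum.inr s ∧ q = Sum.inr t ∧
          G2.Adj s.1 t.1) ∨
        (∃ t : {v : V2 // v ≠ x ∧ v ≠ y}, q = Sum.inr t ∧
          ((p = Sum.inl a1 ∧ t.1 = c1) ∨ (p = Sum.inl b1 ∧ t.1 = c2) ∨
           (p = Sum.inl a2 ∧ t.1 = d1) ∨ (p = Sum.inl b2 ∧ t.1 = d2)))) ∨
       ((∃ s t : V1, q = Sum.inl s ∧ p = Sum.inl t ∧ G1.Adj s t ∧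
          s(s, t) ≠ s(a1, b1) ∧ s(s, t) ≠ s(a2, b2)) ∨
        (∃ s t : {v : V2 // v ≠ x ∧ v ≠ y}, q = Sum.inr s ∧ p = Sum.inr t ∧
          G2.Adj s.1 t.1) ∨
        (∃ t : {v : V2 // v ≠ x ∧ v ≠ y}, p = Sum.inr t ∧
          ((q = Sum.inl a1 ∧ t.1 = c1) ∨ (q = Sum.inl b1 ∧ t.1 = c2) ∨
           (q = Sum.inl a2 ∧ t.1 = d1) ∨ (q = Sum.inl b2 ∧ t.1 = d2))))) := by
    intro p q
    rw [hG, SimpleGraph.fromRel_adj]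
  clear hG
  have adj_ll : ∀ s t : V1, G.Adj (Sum.inl s) (Sum.inl t) ↔
      (G1.Adj s t ∧ s(s, t) ≠ s(a1, b1) ∧ s(s, t) ≠ s(a2, b2)) := by
    intro s t
    rw [hadj]
    constructor
    · rintro ⟨hne, (⟨s',t',hs,ht,h⟩|⟨s',t',hs,ht,h⟩|⟨t',ht,h⟩)|(⟨s',t',hs,ht,h⟩|⟨s',t',hs,ht,h⟩|⟨t',ht,h⟩)⟩
      · cases hs; cases ht; exact h
      · cases hs
      · cases ht
      · cases hs; cases ht
        exact ⟨h.1.symm, by rw [Sym2.eq_swap]; exact h.2.1, by rw [Sym2.eq_swap]; exact h.2.2⟩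
      · cases hs
      · cases ht
    · rintro ⟨hadj', hn1, hn2⟩
      exact ⟨by simpa using hadj'.ne, Or.inl (Or.inl ⟨s, t, rfl, rfl, hadj', hn1, hn2⟩)⟩
  have adj_rr : ∀ u w : {v : V2 // v ≠ x ∧ v ≠ y}, G.Adj (Sum.inr u) (Sum.inr w) ↔ G2.Adj u.1 w.1 := by
    intro u w
    rw [hadj]
    constructor
    · rintro ⟨hne, (⟨s',t',hs,ht,h⟩|⟨s',t',hs,ht,h⟩|⟨t',ht,h⟩)|(⟨s',t',hs,ht,h⟩|⟨s',t',hs,ht,h⟩|⟨t',ht,h⟩)⟩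
      · cases hs
      · cases hs; cases ht; exact h
      · rcases h with ⟨h,_⟩|⟨h,_⟩|⟨h,_⟩|⟨h,_⟩ <;> cases h
      · cases hs
      · cases hs; cases ht; exact h.symm
      · rcases h with ⟨h,_⟩|⟨h,_⟩|⟨h,_⟩|⟨h,_⟩ <;> cases h
    · rintro hadj'
      refine ⟨?_, Or.inl (Or.inr (Or.inl ⟨u, w, rfl, rfl, hadj'⟩))⟩
      intro h
      exact hadj'.ne (congrArg Subtype.val (Sum.inr.inj h))
  have adj_lr : ∀ (s : V1) (u : {v : V2 // v ≠ x ∧ v ≠ y}), G.Adj (Sum.inl s) (Sum.inr u) ↔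
      ((s = a1 ∧ u.1 = c1) ∨ (s = b1 ∧ u.1 = c2) ∨ (s = a2 ∧ u.1 = d1) ∨ (s = b2 ∧ u.1 = d2)) := by
    intro s u
    rw [hadj]
    constructor
    · rintro ⟨hne, (⟨s',t',hs,ht,h⟩|⟨s',t',hs,ht,h⟩|⟨t',ht,h⟩)|(⟨s',t',hs,ht,h⟩|⟨s',t',hs,ht,h⟩|⟨t',ht,h⟩)⟩
      · cases ht
      · cases hs
      · cases Sum.inr.inj ht
        rcases h with ⟨h1,h2⟩|⟨h1,h2⟩|⟨h1,h2⟩|⟨h1,h2⟩ <;>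
          [exact Or.inl ⟨Sum.inl.inj h1, h2⟩;
           exact Or.inr (Or.inl ⟨Sum.inl.inj h1, h2⟩);
           exact Or.inr (Or.inr (Or.inl ⟨Sum.inl.inj h1, h2⟩));
           exact Or.inr (Or.inr (Or.inr ⟨Sum.inl.inj h1, h2⟩))]
      · cases hs
      · cases ht
      · rcases h with ⟨h1,_⟩|⟨h1,_⟩|⟨h1,_⟩|⟨h1,_⟩ <;> cases h1
    · rintro h
      refine ⟨by simp, Or.inl (Or.inr (Or.inr ⟨u, rfl, ?_⟩))⟩
      rcases h with ⟨h1,h2⟩|⟨h1,h2⟩|⟨h1,h2⟩|⟨h1,h2⟩ <;> subst h1 <;>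
        [exact Or.inl ⟨rfl, h2⟩; exact Or.inr (Or.inl ⟨rfl, h2⟩);
         exact Or.inr (Or.inr (Or.inl ⟨rfl, h2⟩)); exact Or.inr (Or.inr (Or.inr ⟨rfl, h2⟩))]
  have hxc1' : c1 ≠ x := Ne.symm hxc1.ne
  have hxc2' : c2 ≠ x := Ne.symm hxc2.ne
  have hyd1' : d1 ≠ y := Ne.symm hyd1.ne
  have hyd2' : d2 ≠ y := Ne.symm hyd2.ne
  have hxy' : x ≠ y := hxy.ne
  set C1 : {v : V2 // v ≠ x ∧ v ≠ y} := ⟨c1, hxc1', hc1y⟩ with hC1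
  set C2 : {v : V2 // v ≠ x ∧ v ≠ y} := ⟨c2, hxc2', hc2y⟩ with hC2
  set D1 : {v : V2 // v ≠ x ∧ v ≠ y} := ⟨d1, hd1x, hyd1'⟩ with hD1
  set D2 : {v : V2 // v ≠ x ∧ v ≠ y} := ⟨d2, hd2x, hyd2'⟩ with hD2
  -- degree at left vertices
  have deg_l : ∀ v : V1, (G.neighborSet (Sum.inl v)).ncard = 3 := by
    intro v
    set f : V1 → V1 ⊕ {v : V2 // v ≠ x ∧ v ≠ y} := fun u =>
      if v = a1 ∧ u = b1 then Sum.inr C1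
      else if v = b1 ∧ u = a1 then Sum.inr C2
      else if v = a2 ∧ u = b2 then Sum.inr D1
      else if v = b2 ∧ u = a2 then Sum.inr D2
      else Sum.inl u with hf
    have hfu1 : ∀ u, v = a1 ∧ u = b1 → f u = Sum.inr C1 := by
      intro u h; simp only [hf]; rw [if_pos h]
    have hfu2 : ∀ u, v = b1 ∧ u = a1 → f u = Sum.inr C2 := by
      intro u h; simp only [hf]
      rw [if_neg (fun h' => hab1 (h'.1.symm.trans h.1)), if_pos h]
    have hfu3 : ∀ u, v = a2 ∧ u = b2 → f u = Sum.inr D1 := by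
      intro u h; simp only [hf]
      rw [if_neg (fun h' => hd12' (h'.1.symm.trans h.1)),
        if_neg (fun h' => hd21' (h'.1.symm.trans h.1)), if_pos h]
    have hfu4 : ∀ u, v = b2 ∧ u = a2 → f u = Sum.inr D2 := by
      intro u h; simp only [hf]
      rw [if_neg (fun h' => hd12'' (h'.1.symm.trans h.1)),
        if_neg (fun h' => hd22' (h'.1.symm.trans h.1)),
        if_neg (fun h' => hab2 (h'.1.symm.trans h.1)), if_pos h]
    have hfu5 : ∀ u, ¬(v = a1 ∧ u = b1) → ¬(v = b1 ∧ u = a1) → ¬(v = a2 ∧ u = b2) →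
        ¬(v = b2 ∧ u = a2) → f u = Sum.inl u := by
      intro u h1 h2 h3 h4; simp only [hf]
      rw [if_neg h1, if_neg h2, if_neg h3, if_neg h4]
    have hinj : Set.InjOn f (G1.neighborSet v) := by
      set g : V1 ⊕ {v : V2 // v ≠ x ∧ v ≠ y} → V1 := Sum.elim id
        (fun _ => if v = a1 then b1 else if v = b1 then a1 else if v = a2 then b2 else a2) with hg
      have hlinv : ∀ u, g (f u) = u := by
        intro u
        by_cases h1 : v = a1 ∧ u = b1
        · rw [hfu1 u h1]; simp only [hg, Sum.elim_inr]
          rw [if_pos h1.1]; exact h1.2.symm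
        · by_cases h2 : v = b1 ∧ u = a1
          · rw [hfu2 u h2]; simp only [hg, Sum.elim_inr]
            rw [if_neg (fun h' => hab1 (h'.symm.trans h2.1)), if_pos h2.1]
            exact h2.2.symm
          · by_cases h3 : v = a2 ∧ u = b2
            · rw [hfu3 u h3]; simp only [hg, Sum.elim_inr]
              rw [if_neg (fun h' => hd12' (h'.symm.trans h3.1)),
                if_neg (fun h' => hd21' (h'.symm.trans h3.1)), if_pos h3.1]
              exact h3.2.symm
            · by_cases h4 : v = b2 ∧ u = a2
              · rw [hfu4 u h4]; simp only [hg, Sum.elim_inr]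
                rw [if_neg (fun h' => hd12'' (h'.symm.trans h4.1)),
                  if_neg (fun h' => hd22' (h'.symm.trans h4.1)),
                  if_neg (fun h' => hab2 (h'.symm.trans h4.1))]
                exact h4.2.symm
              · rw [hfu5 u h1 h2 h3 h4]; simp [hg]
      intro u _ u' _ h
      rw [← hlinv u, ← hlinv u', h]
    have himg : G.neighborSet (Sum.inl v) = f '' (G1.neighborSet v) := by
      ext q
      constructor
      · intro hq
        match q with
        | Sum.inl u =>
          obtain ⟨h, hn1, hn2⟩ := (adj_ll v u).1 hq
          refine ⟨u, h, ?_⟩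
          have h1 : ¬ (v = a1 ∧ u = b1) := by rintro ⟨rfl, rfl⟩; exact hn1 rfl
          have h2 : ¬ (v = b1 ∧ u = a1) := by rintro ⟨rfl, rfl⟩; exact hn1 (Sym2.eq_swap)
          have h3 : ¬ (v = a2 ∧ u = b2) := by rintro ⟨rfl, rfl⟩; exact hn2 rfl
          have h4 : ¬ (v = b2 ∧ u = a2) := by rintro ⟨rfl, rfl⟩; exact hn2 (Sym2.eq_swap)
          exact hfu5 u h1 h2 h3 h4
        | Sum.inr U =>
          rcases (adj_lr v U).1 hq with ⟨rfl, hU⟩ | ⟨rfl, hU⟩ | ⟨rfl, hU⟩ | ⟨rfl, hU⟩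
          · exact ⟨b1, he1, by rw [hfu1 b1 ⟨rfl, rfl⟩, hC1]; congr 1; exact Subtype.ext hU.symm⟩
          · exact ⟨a1, he1.symm, by rw [hfu2 a1 ⟨rfl, rfl⟩, hC2]; congr 1; exact Subtype.ext hU.symm⟩
          · exact ⟨b2, he2, by rw [hfu3 b2 ⟨rfl, rfl⟩, hD1]; congr 1; exact Subtype.ext hU.symm⟩
          · exact ⟨a2, he2.symm, by rw [hfu4 a2 ⟨rfl, rfl⟩, hD2]; congr 1; exact Subtype.ext hU.symm⟩
      · rintro ⟨u, hu, rfl⟩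
        have hu' : G1.Adj v u := hu
        show G.Adj (Sum.inl v) (f u)
        by_cases h1 : v = a1 ∧ u = b1
        · rw [hfu1 u h1]
          exact (adj_lr v C1).2 (Or.inl ⟨h1.1, rfl⟩)
        · by_cases h2 : v = b1 ∧ u = a1
          · rw [hfu2 u h2]
            exact (adj_lr v C2).2 (Or.inr (Or.inl ⟨h2.1, rfl⟩))
          · by_cases h3 : v = a2 ∧ u = b2
            · rw [hfu3 u h3]
              exact (adj_lr v D1).2 (Or.inr (Or.inr (Or.inl ⟨h3.1, rfl⟩)))
            · by_cases h4 : v = b2 ∧ u = a2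
              · rw [hfu4 u h4]
                exact (adj_lr v D2).2 (Or.inr (Or.inr (Or.inr ⟨h4.1, rfl⟩)))
              · rw [hfu5 u h1 h2 h3 h4]
                refine (adj_ll v u).2 ⟨hu', ?_, ?_⟩
                · intro h
                  rcases Sym2.eq_iff.1 h with ⟨rfl, rfl⟩ | ⟨rfl, rfl⟩
                  · exact h1 ⟨rfl, rfl⟩
                  · exact h2 ⟨rfl, rfl⟩
                · intro h
                  rcases Sym2.eq_iff.1 h with ⟨rfl, rfl⟩ | ⟨rfl, rfl⟩
                  · exact h3 ⟨rfl, rfl⟩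
                  · exact h4 ⟨rfl, rfl⟩
    rw [himg, Set.ncard_image_of_injOn hinj, h1cubic]
  -- degree at right vertices
  have deg_r : ∀ U : {v : V2 // v ≠ x ∧ v ≠ y}, (G.neighborSet (Sum.inr U)).ncard = 3 := by
    rintro ⟨v, hvx, hvy⟩
    set f : V2 → V1 ⊕ {v : V2 // v ≠ x ∧ v ≠ y} := fun u =>
      if v = c1 ∧ u = x then Sum.inl a1
      else if v = c2 ∧ u = x then Sum.inl b1
      else if v = d1 ∧ u = y then Sum.inl a2
      else if v = d2 ∧ u = y then Sum.inl b2
      else if h : u ≠ x ∧ u ≠ y then Sum.inr ⟨u, h⟩ else Sum.inl a1 with hf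
    have hfu1 : ∀ u, v = c1 ∧ u = x → f u = Sum.inl a1 := by
      intro u h; simp only [hf]; rw [if_pos h]
    have hfu2 : ∀ u, v = c2 ∧ u = x → f u = Sum.inl b1 := by
      intro u h; simp only [hf]
      rw [if_neg (fun h' => hc12 (h'.1.symm.trans h.1)), if_pos h]
    have hfu3 : ∀ u, v = d1 ∧ u = y → f u = Sum.inl a2 := by
      intro u h; simp only [hf]
      rw [if_neg (fun h' => hxy' (h'.2.symm.trans h.2)),
        if_neg (fun h' => hxy' (h'.2.symm.trans h.2)), if_pos h]
    have hfu4 : ∀ u, v = d2 ∧ u = y → f u = Sum.inl b2 := by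
      intro u h; simp only [hf]
      rw [if_neg (fun h' => hxy' (h'.2.symm.trans h.2)),
        if_neg (fun h' => hxy' (h'.2.symm.trans h.2)),
        if_neg (fun h' => hd12 (h'.1.symm.trans h.1)), if_pos h]
    have hfu5 : ∀ u (h : u ≠ x ∧ u ≠ y), f u = Sum.inr ⟨u, h⟩ := by
      intro u h; simp only [hf]
      rw [if_neg (fun h' => h.1 h'.2), if_neg (fun h' => h.1 h'.2),
        if_neg (fun h' => h.2 h'.2), if_neg (fun h' => h.2 h'.2), dif_pos h]
    have hnxy : ∀ u, G2.Adj v u → ¬(v = c1 ∧ u = x) → ¬(v = c2 ∧ u = x) →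
        ¬(v = d1 ∧ u = y) → ¬(v = d2 ∧ u = y) → u ≠ x ∧ u ≠ y := by
      intro u hu hn1 hn2 hn3 hn4
      constructor
      · intro hux
        rcases hxnbr v (by rw [← hux]; exact hu.symm) with h | h | h
        · exact hvy h
        · exact hn1 ⟨h, hux⟩
        · exact hn2 ⟨h, hux⟩
      · intro huy
        rcases hynbr v (by rw [← huy]; exact hu.symm) with h | h | h
        · exact hvx h
        · exact hn3 ⟨h, huy⟩
        · exact hn4 ⟨h, huy⟩
    have hinj : Set.InjOn f (G2.neighborSet v) := by
      set g : V1 ⊕ {v : V2 // v ≠ x ∧ v ≠ y} → V2 := Sum.elim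
        (fun t => if v = c1 ∧ t = a1 then x else if v = c2 ∧ t = b1 then x
          else if v = d1 ∧ t = a2 then y else if v = d2 ∧ t = b2 then y else x)
        Subtype.val with hg
      have hlinv : ∀ u, G2.Adj v u → g (f u) = u := by
        intro u hu
        by_cases h1 : v = c1 ∧ u = x
        · rw [hfu1 u h1]; simp only [hg, Sum.elim_inl]
          rw [if_pos ⟨h1.1, trivial⟩]; exact h1.2.symm
        · by_cases h2 : v = c2 ∧ u = x
          · rw [hfu2 u h2]; simp only [hg, Sum.elim_inl]
            rw [if_neg (fun h' => hab1 h'.2.symm), if_pos ⟨h2.1, trivial⟩]; exact h2.2.symm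
          · by_cases h3 : v = d1 ∧ u = y
            · rw [hfu3 u h3]; simp only [hg, Sum.elim_inl]
              rw [if_neg (fun h' => hd12' h'.2.symm), if_neg (fun h' => hd21' h'.2.symm),
                if_pos ⟨h3.1, trivial⟩]
              exact h3.2.symm
            · by_cases h4 : v = d2 ∧ u = y
              · rw [hfu4 u h4]; simp only [hg, Sum.elim_inl]
                rw [if_neg (fun h' => hd12'' h'.2.symm), if_neg (fun h' => hd22' h'.2.symm),
                  if_neg (fun h' => hab2 h'.2.symm), if_pos ⟨h4.1, trivial⟩]
                exact h4.2.symm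
              · rw [hfu5 u (hnxy u hu h1 h2 h3 h4)]; simp [hg]
      intro u hu u' hu' h
      rw [← hlinv u hu, ← hlinv u' hu', h]
    have himg : G.neighborSet (Sum.inr ⟨v, hvx, hvy⟩) = f '' (G2.neighborSet v) := by
      ext q
      constructor
      · intro hq
        match q with
        | Sum.inl s =>
          have hq' : G.Adj (Sum.inl s) (Sum.inr ⟨v, hvx, hvy⟩) := hq.symm
          rcases (adj_lr s ⟨v, hvx, hvy⟩).1 hq' with ⟨rfl, hv⟩ | ⟨rfl, hv⟩ | ⟨rfl, hv⟩ | ⟨rfl, hv⟩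
          · have hv' : v = c1 := hv
            exact ⟨x, by rw [hv']; exact hxc1.symm, hfu1 x ⟨hv', rfl⟩⟩
          · have hv' : v = c2 := hv
            exact ⟨x, by rw [hv']; exact hxc2.symm, hfu2 x ⟨hv', rfl⟩⟩
          · have hv' : v = d1 := hv
            exact ⟨y, by rw [hv']; exact hyd1.symm, hfu3 y ⟨hv', rfl⟩⟩
          · have hv' : v = d2 := hv
            exact ⟨y, by rw [hv']; exact hyd2.symm, hfu4 y ⟨hv', rfl⟩⟩
        | Sum.inr W =>
          have hadj' : G2.Adj v W.1 := (adj_rr ⟨v, hvx, hvy⟩ W).1 hq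
          exact ⟨W.1, hadj', by rw [hfu5 W.1 W.2]⟩
      · rintro ⟨u, hu, rfl⟩
        have hu' : G2.Adj v u := hu
        show G.Adj (Sum.inr ⟨v, hvx, hvy⟩) (f u)
        by_cases h1 : v = c1 ∧ u = x
        · rw [hfu1 u h1]
          exact ((adj_lr a1 ⟨v, hvx, hvy⟩).2 (Or.inl ⟨rfl, h1.1⟩)).symm
        · by_cases h2 : v = c2 ∧ u = x
          · rw [hfu2 u h2]
            exact ((adj_lr b1 ⟨v, hvx, hvy⟩).2 (Or.inr (Or.inl ⟨rfl, h2.1⟩))).symm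
          · by_cases h3 : v = d1 ∧ u = y
            · rw [hfu3 u h3]
              exact ((adj_lr a2 ⟨v, hvx, hvy⟩).2 (Or.inr (Or.inr (Or.inl ⟨rfl, h3.1⟩)))).symm
            · by_cases h4 : v = d2 ∧ u = y
              · rw [hfu4 u h4]
                exact ((adj_lr b2 ⟨v, hvx, hvy⟩).2 (Or.inr (Or.inr (Or.inr ⟨rfl, h4.1⟩)))).symm
              · rw [hfu5 u (hnxy u hu' h1 h2 h3 h4)]
                exact (adj_rr ⟨v, hvx, hvy⟩ ⟨u, _⟩).2 hu'
    rw [himg, Set.ncard_image_of_injOn hinj, h2cubic]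
  have hcubic : ∀ w, (G.neighborSet w).ncard = 3 := by
    intro w
    match w with
    | Sum.inl v => exact deg_l v
    | Sum.inr U => exact deg_r U
  refine ⟨hcubic, ?_⟩
  rintro ⟨c, hc⟩
  -- the four cut edges
  have hadj1 : G.Adj (Sum.inl a1) (Sum.inr C1) := (adj_lr a1 C1).2 (Or.inl ⟨rfl, rfl⟩)
  have hadj2 : G.Adj (Sum.inl b1) (Sum.inr C2) := (adj_lr b1 C2).2 (Or.inr (Or.inl ⟨rfl, rfl⟩))
  have hadj3 : G.Adj (Sum.inl a2) (Sum.inr D1) := (adj_lr a2 D1).2 (Or.inr (Or.inr (Or.inl ⟨rfl, rfl⟩)))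
  have hadj4 : G.Adj (Sum.inl b2) (Sum.inr D2) := (adj_lr b2 D2).2 (Or.inr (Or.inr (Or.inr ⟨rfl, rfl⟩)))
  set ca : Fin 3 := c s(Sum.inl a1, Sum.inr C1) with hca
  set cb : Fin 3 := c s(Sum.inl b1, Sum.inr C2) with hcb
  set cg : Fin 3 := c s(Sum.inl a2, Sum.inr D1) with hcg
  set cd : Fin 3 := c s(Sum.inl b2, Sum.inr D2) with hcd
  have hE12 : s(a1, b1) ≠ s(a2, b2) := by
    intro h
    rcases Sym2.eq_iff.1 h with ⟨h1, _⟩ | ⟨h1, _⟩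
    · exact hd12' h1
    · exact hd12'' h1
  by_cases hcase : ca = cb ∧ cg = cd
  · -- extend to a proper coloring of G1
    set cA : Sym2 V1 → Fin 3 := fun e =>
      if e = s(a1, b1) then ca else if e = s(a2, b2) then cg
      else c (Sym2.map Sum.inl e) with hcA
    have evalA1 : cA s(a1, b1) = ca := by simp only [hcA]; exact if_pos trivial
    have evalA2 : cA s(a2, b2) = cg := by
      simp only [hcA]; rw [if_neg (Ne.symm hE12)]; exact if_pos trivial
    have evalA3 : ∀ e, e ≠ s(a1, b1) → e ≠ s(a2, b2) → cA e = c (Sym2.map Sum.inl e) := by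
      intro e h1 h2; simp only [hcA]; rw [if_neg h1, if_neg h2]
    have key1 : ∀ v q, G1.Adj v q → (v = a1 ∨ v = b1) → s(v, q) ≠ s(a1, b1) →
        s(v, q) ≠ s(a2, b2) → ca ≠ c s(Sum.inl v, Sum.inl q) := by
      intro v q hadj' hv hn1 hn2
      have hF : s((Sum.inl v : V1 ⊕ {v : V2 // v ≠ x ∧ v ≠ y}), Sum.inl q) ∈ G.edgeSet :=
        (SimpleGraph.mem_edgeSet _).2 ((adj_ll v q).2 ⟨hadj', hn1, hn2⟩)
      rcases hv with hv | hv
      · rw [hca, hv]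
        refine hc _ ((SimpleGraph.mem_edgeSet _).2 hadj1) _ (hv ▸ hF) ?_
          ⟨Sum.inl a1, Sym2.mem_mk_left _ _, Sym2.mem_mk_left _ _⟩
        intro h
        rcases Sym2.eq_iff.1 h with ⟨_, h2⟩ | ⟨_, h2⟩ <;> simp at h2
      · rw [hcase.1, hcb, hv]
        refine hc _ ((SimpleGraph.mem_edgeSet _).2 hadj2) _ (hv ▸ hF) ?_
          ⟨Sum.inl b1, Sym2.mem_mk_left _ _, Sym2.mem_mk_left _ _⟩
        intro h
        rcases Sym2.eq_iff.1 h with ⟨_, h2⟩ | ⟨_, h2⟩ <;> simp at h2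
    have key2 : ∀ v q, G1.Adj v q → (v = a2 ∨ v = b2) → s(v, q) ≠ s(a1, b1) →
        s(v, q) ≠ s(a2, b2) → cg ≠ c s(Sum.inl v, Sum.inl q) := by
      intro v q hadj' hv hn1 hn2
      have hF : s((Sum.inl v : V1 ⊕ {v : V2 // v ≠ x ∧ v ≠ y}), Sum.inl q) ∈ G.edgeSet :=
        (SimpleGraph.mem_edgeSet _).2 ((adj_ll v q).2 ⟨hadj', hn1, hn2⟩)
      rcases hv with hv | hv
      · rw [hcg, hv]
        refine hc _ ((SimpleGraph.mem_edgeSet _).2 hadj3) _ (hv ▸ hF) ?_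
          ⟨Sum.inl a2, Sym2.mem_mk_left _ _, Sym2.mem_mk_left _ _⟩
        intro h
        rcases Sym2.eq_iff.1 h with ⟨_, h2⟩ | ⟨_, h2⟩ <;> simp at h2
      · rw [hcase.2, hcd, hv]
        refine hc _ ((SimpleGraph.mem_edgeSet _).2 hadj4) _ (hv ▸ hF) ?_
          ⟨Sum.inl b2, Sym2.mem_mk_left _ _, Sym2.mem_mk_left _ _⟩
        intro h
        rcases Sym2.eq_iff.1 h with ⟨_, h2⟩ | ⟨_, h2⟩ <;> simp at h2
    refine h1nc ⟨cA, ?_⟩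
    rintro e he f hf hef ⟨v, hve, hvf⟩
    obtain ⟨p, hvp, rfl⟩ := edge_rep he hve
    obtain ⟨q, hvq, rfl⟩ := edge_rep hf hvf
    by_cases h1 : s(v, p) = s(a1, b1)
    · by_cases h2 : s(v, q) = s(a1, b1)
      · exact absurd (h1.trans h2.symm) hef
      · by_cases h3 : s(v, q) = s(a2, b2)
        · rcases Sym2.eq_iff.1 h1 with ⟨hv1, _⟩ | ⟨hv1, _⟩ <;>
            rcases Sym2.eq_iff.1 h3 with ⟨hv2, _⟩ | ⟨hv2, _⟩
          · exact absurd (hv1.symm.trans hv2) hd12'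
          · exact absurd (hv1.symm.trans hv2) hd12''
          · exact absurd (hv1.symm.trans hv2) hd21'
          · exact absurd (hv1.symm.trans hv2) hd22'
        · rw [h1, evalA1, evalA3 _ h2 h3, Sym2.map_pair_eq]
          refine key1 v q hvq ?_ h2 h3
          rcases Sym2.eq_iff.1 h1 with ⟨h, _⟩ | ⟨h, _⟩
          · exact Or.inl h
          · exact Or.inr h
    · by_cases h1' : s(v, p) = s(a2, b2)
      · by_cases h2 : s(v, q) = s(a1, b1)
        · rcases Sym2.eq_iff.1 h1' with ⟨hv1, _⟩ | ⟨hv1, _⟩ <;>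
            rcases Sym2.eq_iff.1 h2 with ⟨hv2, _⟩ | ⟨hv2, _⟩
          · exact absurd (hv2.symm.trans hv1) hd12'
          · exact absurd (hv2.symm.trans hv1) hd21'
          · exact absurd (hv2.symm.trans hv1) hd12''
          · exact absurd (hv2.symm.trans hv1) hd22'
        · by_cases h3 : s(v, q) = s(a2, b2)
          · exact absurd (h1'.trans h3.symm) hef
          · rw [h1', evalA2, evalA3 _ h2 h3, Sym2.map_pair_eq]
            refine key2 v q hvq ?_ h2 h3
            rcases Sym2.eq_iff.1 h1' with ⟨h, _⟩ | ⟨h, _⟩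
            · exact Or.inl h
            · exact Or.inr h
      · rw [evalA3 _ h1 h1']
        by_cases h2 : s(v, q) = s(a1, b1)
        · rw [h2, evalA1, Sym2.map_pair_eq]
          refine (key1 v p hvp ?_ h1 h1').symm
          rcases Sym2.eq_iff.1 h2 with ⟨h, _⟩ | ⟨h, _⟩
          · exact Or.inl h
          · exact Or.inr h
        · by_cases h3 : s(v, q) = s(a2, b2)
          · rw [h3, evalA2, Sym2.map_pair_eq]
            refine (key2 v p hvp ?_ h1 h1').symm
            rcases Sym2.eq_iff.1 h3 with ⟨h, _⟩ | ⟨h, _⟩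
            · exact Or.inl h
            · exact Or.inr h
          · rw [evalA3 _ h2 h3, Sym2.map_pair_eq, Sym2.map_pair_eq]
            refine hc _ ((SimpleGraph.mem_edgeSet _).2 ((adj_ll v p).2 ⟨hvp, h1, h1'⟩)) _
              ((SimpleGraph.mem_edgeSet _).2 ((adj_ll v q).2 ⟨hvq, h2, h3⟩)) ?_
              ⟨Sum.inl v, Sym2.mem_mk_left _ _, Sym2.mem_mk_left _ _⟩
            intro h
            apply hef
            rcases Sym2.eq_iff.1 h with ⟨_, hq⟩ | ⟨_, hq'⟩
            · rw [Sum.inl.inj hq]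
            · exact absurd (Sum.inl.inj hq') hvp.ne'
  · -- Case B : transfer a coloring to G2
    have parity : ∀ i : Fin 3,
        ((if ca = i then 1 else 0) + (if cb = i then 1 else 0) + (if cg = i then 1 else 0) +
          (if cd = i then 1 else 0)) % 2 = (Fintype.card V1) % 2 := by
      intro i
      have hunique : ∀ v : V1, ∃! u, G.Adj (Sum.inl v) u ∧ c s(Sum.inl v, u) = i :=
        fun v => exists_unique_color_nbr G c hc (Sum.inl v) (hcubic _) i
      set nbr : V1 → V1 ⊕ {v : V2 // v ≠ x ∧ v ≠ y} := fun v => Classical.choose (hunique v)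
        with hnbr0
      have hnbr : ∀ v, G.Adj (Sum.inl v) (nbr v) ∧ c s(Sum.inl v, nbr v) = i :=
        fun v => (Classical.choose_spec (hunique v)).1
      have huniq : ∀ v u, G.Adj (Sum.inl v) u ∧ c s(Sum.inl v, u) = i → u = nbr v :=
        fun v => (Classical.choose_spec (hunique v)).2
      set A : Finset V1 := Finset.univ.filter (fun v => ∃ w : V1, nbr v = Sum.inl w) with hA
      set B : Finset V1 := Finset.univ.filter (fun v => ¬ ∃ w : V1, nbr v = Sum.inl w) with hB
      set fA : V1 → V1 := fun v => Sum.elim id (fun _ => v) (nbr v) with hfA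
      have hfAdef : ∀ v w, nbr v = Sum.inl w → fA v = w := by
        intro v w h; simp only [hfA]; rw [h]; rfl
      have hswap : ∀ v w : V1, nbr v = Sum.inl w → nbr w = Sum.inl v := by
        intro v w h
        have h1 := hnbr v
        rw [h] at h1
        refine (huniq w (Sum.inl v) ⟨h1.1.symm, ?_⟩).symm
        rw [Sym2.eq_swap]
        exact h1.2
      have hmemA : ∀ a ∈ A, fA a ∈ A := by
        intro a ha
        obtain ⟨w, hw⟩ := (Finset.mem_filter.1 ha).2
        rw [hfAdef a w hw]
        exact Finset.mem_filter.2 ⟨Finset.mem_univ _, ⟨a, hswap a w hw⟩⟩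
      have hinvA : ∀ a ∈ A, fA (fA a) = a := by
        intro a ha
        obtain ⟨w, hw⟩ := (Finset.mem_filter.1 ha).2
        rw [hfAdef a w hw, hfAdef w a (hswap a w hw)]
      have hneA : ∀ a ∈ A, fA a ≠ a := by
        intro a ha h
        obtain ⟨w, hw⟩ := (Finset.mem_filter.1 ha).2
        rw [hfAdef a w hw] at h
        rw [h] at hw
        exact (hnbr a).1.ne (by rw [hw])
      have hevenA : Even A.card := even_card_of_invol fA A.card A rfl hmemA hinvA hneA
      have hsplit : A.card + B.card = Fintype.card V1 := by
        rw [hA, hB, Finset.card_filter_add_card_filter_not, Finset.card_univ]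
      have hBiff : ∀ v : V1, (¬ ∃ w : V1, nbr v = Sum.inl w) ↔
          ((v = a1 ∧ ca = i) ∨ (v = b1 ∧ cb = i) ∨ (v = a2 ∧ cg = i) ∨ (v = b2 ∧ cd = i)) := by
        intro v
        constructor
        · intro hnp
          obtain ⟨u, hu⟩ : ∃ u, nbr v = Sum.inr u := by
            cases hnv : nbr v with
            | inl w => exact absurd ⟨w, hnv⟩ hnp
            | inr u => exact ⟨u, rfl⟩
          have h1 := hnbr v
          rw [hu] at h1
          rcases (adj_lr v u).1 h1.1 with ⟨hv, hu1⟩ | ⟨hv, hu1⟩ | ⟨hv, hu1⟩ | ⟨hv, hu1⟩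
          · have hC : u = C1 := Subtype.ext hu1
            exact Or.inl ⟨hv, by rw [hca, ← hv, ← hC]; exact h1.2⟩
          · have hC : u = C2 := Subtype.ext hu1
            exact Or.inr (Or.inl ⟨hv, by rw [hcb, ← hv, ← hC]; exact h1.2⟩)
          · have hC : u = D1 := Subtype.ext hu1
            exact Or.inr (Or.inr (Or.inl ⟨hv, by rw [hcg, ← hv, ← hC]; exact h1.2⟩))
          · have hC : u = D2 := Subtype.ext hu1
            exact Or.inr (Or.inr (Or.inr ⟨hv, by rw [hcd, ← hv, ← hC]; exact h1.2⟩))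
        · rintro (⟨hv, hci⟩ | ⟨hv, hci⟩ | ⟨hv, hci⟩ | ⟨hv, hci⟩) <;> rw [hv]
          · have h0 : Sum.inr C1 = nbr a1 :=
              huniq a1 (Sum.inr C1) ⟨hadj1, by rw [← hca]; exact hci⟩
            rintro ⟨w, hw⟩
            rw [← h0] at hw
            cases hw
          · have h0 : Sum.inr C2 = nbr b1 :=
              huniq b1 (Sum.inr C2) ⟨hadj2, by rw [← hcb]; exact hci⟩
            rintro ⟨w, hw⟩
            rw [← h0] at hw
            cases hw
          · have h0 : Sum.inr D1 = nbr a2 :=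
              huniq a2 (Sum.inr D1) ⟨hadj3, by rw [← hcg]; exact hci⟩
            rintro ⟨w, hw⟩
            rw [← h0] at hw
            cases hw
          · have h0 : Sum.inr D2 = nbr b2 :=
              huniq b2 (Sum.inr D2) ⟨hadj4, by rw [← hcd]; exact hci⟩
            rintro ⟨w, hw⟩
            rw [← h0] at hw
            cases hw
      have hBeq : B = ({a1, b1, a2, b2} : Finset V1).filter
          (fun v => (v = a1 ∧ ca = i) ∨ (v = b1 ∧ cb = i) ∨ (v = a2 ∧ cg = i) ∨
            (v = b2 ∧ cd = i)) := by
        ext v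
        rw [hB, Finset.mem_filter, Finset.mem_filter]
        constructor
        · rintro ⟨-, hnp⟩
          have h := (hBiff v).1 hnp
          refine ⟨?_, h⟩
          rcases h with ⟨hv, -⟩ | ⟨hv, -⟩ | ⟨hv, -⟩ | ⟨hv, -⟩ <;> subst hv <;> simp
        · rintro ⟨-, h⟩
          exact ⟨Finset.mem_univ _, (hBiff v).2 h⟩
      have hBcard : B.card = (if ca = i then 1 else 0) + (if cb = i then 1 else 0) +
          (if cg = i then 1 else 0) + (if cd = i then 1 else 0) := by
        rw [hBeq, Finset.card_filter]
        have hm1 : a1 ∉ ({b1, a2, b2} : Finset V1) := by simp [hab1, hd12', hd12'']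
        have hm2 : b1 ∉ ({a2, b2} : Finset V1) := by simp [hd21', hd22']
        have hm3 : a2 ∉ ({b2} : Finset V1) := by simp [hab2]
        rw [show ({a1, b1, a2, b2} : Finset V1) = insert a1 (insert b1 (insert a2 {b2})) from rfl,
          Finset.sum_insert hm1, Finset.sum_insert hm2, Finset.sum_insert hm3,
          Finset.sum_singleton]
        have p1 : ((a1 = a1 ∧ ca = i) ∨ (a1 = b1 ∧ cb = i) ∨ (a1 = a2 ∧ cg = i) ∨
            (a1 = b2 ∧ cd = i)) ↔ (ca = i) := by simp [hab1, hd12', hd12'']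
        have p2 : ((b1 = a1 ∧ ca = i) ∨ (b1 = b1 ∧ cb = i) ∨ (b1 = a2 ∧ cg = i) ∨
            (b1 = b2 ∧ cd = i)) ↔ (cb = i) := by simp [Ne.symm hab1, hd21', hd22']
        have p3 : ((a2 = a1 ∧ ca = i) ∨ (a2 = b1 ∧ cb = i) ∨ (a2 = a2 ∧ cg = i) ∨
            (a2 = b2 ∧ cd = i)) ↔ (cg = i) := by simp [Ne.symm hd12', Ne.symm hd21', hab2]
        have p4 : ((b2 = a1 ∧ ca = i) ∨ (b2 = b1 ∧ cb = i) ∨ (b2 = a2 ∧ cg = i) ∨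
            (b2 = b2 ∧ cd = i)) ↔ (cd = i) := by
          simp [Ne.symm hd12'', Ne.symm hd22', Ne.symm hab2]
        rw [if_congr p1 rfl rfl, if_congr p2 rfl rfl, if_congr p3 rfl rfl, if_congr p4 rfl rfl]
        ring
      obtain ⟨k, hk⟩ := hevenA
      omega
    obtain ⟨hab', hgd', hpair⟩ :=
      fin3_parity ca cb cg cd (fun i j => (parity i).trans (parity j).symm) hcase
    set ε : Fin 3 := -(ca + cb) with hεdef
    obtain ⟨hεa, hεb⟩ := fin3_third ca cb hab'
    have hεg : ε ≠ cg := by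
      rcases hpair with ⟨h1, -⟩ | ⟨-, h2⟩
      · rw [← h1]; exact hεa
      · rw [← h2]; exact hεb
    have hεd : ε ≠ cd := by
      rcases hpair with ⟨-, h2⟩ | ⟨h1, -⟩
      · rw [← h2]; exact hεb
      · rw [← h1]; exact hεa
    have keyc : ∀ (s0 s0' : V1) (W W' : {v : V2 // v ≠ x ∧ v ≠ y}),
        G.Adj (Sum.inl s0) (Sum.inr W) → G.Adj (Sum.inl s0') (Sum.inr W') → s0 ≠ s0' →
        W = W' → c s(Sum.inl s0, Sum.inr W) ≠ c s(Sum.inl s0', Sum.inr W') := by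
      intro s0 s0' W W' h1 h2 hss hWW
      refine hc _ ((SimpleGraph.mem_edgeSet _).2 h1) _ ((SimpleGraph.mem_edgeSet _).2 h2) ?_
        ⟨Sum.inr W, Sym2.mem_mk_right _ _, by rw [hWW]; exact Sym2.mem_mk_right _ _⟩
      intro h
      rcases Sym2.eq_iff.1 h with ⟨hh, -⟩ | ⟨hh, -⟩
      · exact hss (Sum.inl.inj hh)
      · simp at hh
    set emb : V2 → V1 ⊕ {v : V2 // v ≠ x ∧ v ≠ y} := fun u =>
      if h : u ≠ x ∧ u ≠ y then Sum.inr ⟨u, h⟩ else Sum.inl a1 with hemb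
    have hembr : ∀ (u : V2) (h : u ≠ x ∧ u ≠ y), emb u = Sum.inr ⟨u, h⟩ := by
      intro u h; simp only [hemb]; rw [dif_pos h]
    set cB : Sym2 V2 → Fin 3 := fun e =>
      if e = s(x, y) then ε
      else if e = s(x, c1) then ca
      else if e = s(x, c2) then cb
      else if e = s(y, d1) then cg
      else if e = s(y, d2) then cd
      else c (Sym2.map emb e) with hcB
    -- pairwise distinctness of the special edges
    have n12 : s(x, y) ≠ s(x, c1) := by
      intro h
      rcases Sym2.eq_iff.1 h with ⟨-, h2⟩ | ⟨h1, -⟩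
      · exact hc1y h2.symm
      · exact hxc1' h1.symm
    have n13 : s(x, y) ≠ s(x, c2) := by
      intro h
      rcases Sym2.eq_iff.1 h with ⟨-, h2⟩ | ⟨h1, -⟩
      · exact hc2y h2.symm
      · exact hxc2' h1.symm
    have n14 : s(x, y) ≠ s(y, d1) := by
      intro h
      rcases Sym2.eq_iff.1 h with ⟨h1, -⟩ | ⟨h1, -⟩
      · exact hxy' h1
      · exact hd1x h1.symm
    have n15 : s(x, y) ≠ s(y, d2) := by
      intro h
      rcases Sym2.eq_iff.1 h with ⟨h1, -⟩ | ⟨h1, -⟩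
      · exact hxy' h1
      · exact hd2x h1.symm
    have n23 : s(x, c1) ≠ s(x, c2) := by
      intro h
      rcases Sym2.eq_iff.1 h with ⟨-, h2⟩ | ⟨h1, -⟩
      · exact hc12 h2
      · exact hxc2' h1.symm
    have n24 : s(x, c1) ≠ s(y, d1) := by
      intro h
      rcases Sym2.eq_iff.1 h with ⟨h1, -⟩ | ⟨h1, -⟩
      · exact hxy' h1
      · exact hd1x h1.symm
    have n25 : s(x, c1) ≠ s(y, d2) := by
      intro h
      rcases Sym2.eq_iff.1 h with ⟨h1, -⟩ | ⟨h1, -⟩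
      · exact hxy' h1
      · exact hd2x h1.symm
    have n34 : s(x, c2) ≠ s(y, d1) := by
      intro h
      rcases Sym2.eq_iff.1 h with ⟨h1, -⟩ | ⟨h1, -⟩
      · exact hxy' h1
      · exact hd1x h1.symm
    have n35 : s(x, c2) ≠ s(y, d2) := by
      intro h
      rcases Sym2.eq_iff.1 h with ⟨h1, -⟩ | ⟨h1, -⟩
      · exact hxy' h1
      · exact hd2x h1.symm
    have n45 : s(y, d1) ≠ s(y, d2) := by
      intro h
      rcases Sym2.eq_iff.1 h with ⟨-, h2⟩ | ⟨h1, -⟩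
      · exact hd12 h2
      · exact hyd2' h1.symm
    have evB1 : cB s(x, y) = ε := by simp only [hcB]; exact if_pos trivial
    have evB2 : cB s(x, c1) = ca := by
      simp only [hcB]; rw [if_neg (Ne.symm n12)]; exact if_pos trivial
    have evB3 : cB s(x, c2) = cb := by
      simp only [hcB]; rw [if_neg (Ne.symm n13), if_neg (Ne.symm n23)]; exact if_pos trivial
    have evB4 : cB s(y, d1) = cg := by
      simp only [hcB]
      rw [if_neg (Ne.symm n14), if_neg (Ne.symm n24), if_neg (Ne.symm n34)]
      exact if_pos trivial
    have evB5 : cB s(y, d2) = cd := by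
      simp only [hcB]
      rw [if_neg (Ne.symm n15), if_neg (Ne.symm n25), if_neg (Ne.symm n35),
        if_neg (Ne.symm n45)]
      exact if_pos trivial
    have evB6 : ∀ e, e ≠ s(x, y) → e ≠ s(x, c1) → e ≠ s(x, c2) → e ≠ s(y, d1) →
        e ≠ s(y, d2) → cB e = c (Sym2.map emb e) := by
      intro e h1 h2 h3 h4 h5
      simp only [hcB]
      rw [if_neg h1, if_neg h2, if_neg h3, if_neg h4, if_neg h5]
    have classify : ∀ e, e ∈ G2.edgeSet → e = s(x, y) ∨ e = s(x, c1) ∨ e = s(x, c2) ∨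
        e = s(y, d1) ∨ e = s(y, d2) ∨ (∀ w ∈ e, w ≠ x ∧ w ≠ y) := by
      intro e he
      by_cases h1 : e = s(x, y)
      · exact Or.inl h1
      by_cases h2 : e = s(x, c1)
      · exact Or.inr (Or.inl h2)
      by_cases h3 : e = s(x, c2)
      · exact Or.inr (Or.inr (Or.inl h3))
      by_cases h4 : e = s(y, d1)
      · exact Or.inr (Or.inr (Or.inr (Or.inl h4)))
      by_cases h5 : e = s(y, d2)
      · exact Or.inr (Or.inr (Or.inr (Or.inr (Or.inl h5))))
      refine Or.inr (Or.inr (Or.inr (Or.inr (Or.inr ?_))))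
      intro w hw
      constructor
      · intro hwx
        have hw' : x ∈ e := by rw [← hwx]; exact hw
        obtain ⟨q, hq2, he'⟩ := edge_rep he hw'
        rcases hxnbr q hq2 with hr | hr | hr
        · exact h1 (by rw [he', hr])
        · exact h2 (by rw [he', hr])
        · exact h3 (by rw [he', hr])
      · intro hwy
        have hw' : y ∈ e := by rw [← hwy]; exact hw
        obtain ⟨q, hq2, he'⟩ := edge_rep he hw'
        rcases hynbr q hq2 with hr | hr | hr
        · exact h1 (by rw [he', hr, Sym2.eq_swap])
        · exact h4 (by rw [he', hr])
        · exact h5 (by rw [he', hr])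
    have plain_ne1 : ∀ e, (∀ w ∈ e, w ≠ x ∧ w ≠ y) → (e ≠ s(x, y) ∧ e ≠ s(x, c1) ∧
        e ≠ s(x, c2) ∧ e ≠ s(y, d1) ∧ e ≠ s(y, d2)) := by
      intro e hp
      refine ⟨?_, ?_, ?_, ?_, ?_⟩ <;> intro h
      · exact (hp x (by rw [h]; exact Sym2.mem_mk_left _ _)).1 rfl
      · exact (hp x (by rw [h]; exact Sym2.mem_mk_left _ _)).1 rfl
      · exact (hp x (by rw [h]; exact Sym2.mem_mk_left _ _)).1 rfl
      · exact (hp y (by rw [h]; exact Sym2.mem_mk_left _ _)).2 rfl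
      · exact (hp y (by rw [h]; exact Sym2.mem_mk_left _ _)).2 rfl
    have key_sp : ∀ (s0 : V1) (W : {v : V2 // v ≠ x ∧ v ≠ y}) (ff : Sym2 V2),
        G.Adj (Sum.inl s0) (Sum.inr W) → ff ∈ G2.edgeSet → (∀ w ∈ ff, w ≠ x ∧ w ≠ y) →
        W.1 ∈ ff → c s(Sum.inl s0, Sum.inr W) ≠ cB ff := by
      intro s0 W ff hW hffm hffp hWin
      obtain ⟨q, hq, rfl⟩ := edge_rep hffm hWin
      have hq2 := hffp q (Sym2.mem_mk_right _ _)
      obtain ⟨pn1, pn2, pn3, pn4, pn5⟩ := plain_ne1 _ hffp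
      have hembW : emb W.1 = Sum.inr W := hembr W.1 W.2
      rw [evB6 _ pn1 pn2 pn3 pn4 pn5, Sym2.map_pair_eq, hembr q hq2, hembW]
      refine hc _ ((SimpleGraph.mem_edgeSet _).2 hW) _
        ((SimpleGraph.mem_edgeSet _).2 ((adj_rr W ⟨q, hq2⟩).2 hq)) ?_
        ⟨Sum.inr W, Sym2.mem_mk_right _ _, Sym2.mem_mk_left _ _⟩
      intro h
      rcases Sym2.eq_iff.1 h with ⟨hh, -⟩ | ⟨hh, -⟩ <;> simp at hh
    refine h2nc ⟨cB, ?_⟩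
    rintro e he f hf hef ⟨v, hve, hvf⟩
    rcases classify e he with he' | he' | he' | he' | he' | hep <;>
      rcases classify f hf with hf' | hf' | hf' | hf' | hf' | hfp
    -- e = xy
    · exact absurd (he'.trans hf'.symm) hef
    · rw [he', hf', evB1, evB2]; exact hεa
    · rw [he', hf', evB1, evB3]; exact hεb
    · rw [he', hf', evB1, evB4]; exact hεg
    · rw [he', hf', evB1, evB5]; exact hεd
    · rw [he'] at hve
      rcases Sym2.mem_iff.1 hve with hv | hv
      · exact absurd hv (hfp v hvf).1
      · exact absurd hv (hfp v hvf).2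
    -- e = xc1
    · rw [he', hf', evB2, evB1]; exact hεa.symm
    · exact absurd (he'.trans hf'.symm) hef
    · rw [he', hf', evB2, evB3]; exact hab'
    · rw [he'] at hve; rw [hf'] at hvf
      rcases Sym2.mem_iff.1 hve with hv1 | hv1 <;> rcases Sym2.mem_iff.1 hvf with hv2 | hv2
      · exact absurd (hv1.symm.trans hv2) hxy'
      · exact absurd (hv2.symm.trans hv1) hd1x
      · exact absurd (hv1.symm.trans hv2) hc1y
      · rw [he', hf', evB2, evB4, hca, hcg]
        exact keyc a1 a2 C1 D1 hadj1 hadj3 hd12' (Subtype.ext (hv1.symm.trans hv2))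
    · rw [he'] at hve; rw [hf'] at hvf
      rcases Sym2.mem_iff.1 hve with hv1 | hv1 <;> rcases Sym2.mem_iff.1 hvf with hv2 | hv2
      · exact absurd (hv1.symm.trans hv2) hxy'
      · exact absurd (hv2.symm.trans hv1) hd2x
      · exact absurd (hv1.symm.trans hv2) hc1y
      · rw [he', hf', evB2, evB5, hca, hcd]
        exact keyc a1 b2 C1 D2 hadj1 hadj4 hd12'' (Subtype.ext (hv1.symm.trans hv2))
    · rw [he'] at hve
      rcases Sym2.mem_iff.1 hve with hv | hv
      · exact absurd hv (hfp v hvf).1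
      · rw [he', evB2, hca]
        exact key_sp a1 C1 f hadj1 hf hfp (by show c1 ∈ f; rw [← hv]; exact hvf)
    -- e = xc2
    · rw [he', hf', evB3, evB1]; exact hεb.symm
    · rw [he', hf', evB3, evB2]; exact hab'.symm
    · exact absurd (he'.trans hf'.symm) hef
    · rw [he'] at hve; rw [hf'] at hvf
      rcases Sym2.mem_iff.1 hve with hv1 | hv1 <;> rcases Sym2.mem_iff.1 hvf with hv2 | hv2
      · exact absurd (hv1.symm.trans hv2) hxy'
      · exact absurd (hv2.symm.trans hv1) hd1x
      · exact absurd (hv1.symm.trans hv2) hc2y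
      · rw [he', hf', evB3, evB4, hcb, hcg]
        exact keyc b1 a2 C2 D1 hadj2 hadj3 hd21' (Subtype.ext (hv1.symm.trans hv2))
    · rw [he'] at hve; rw [hf'] at hvf
      rcases Sym2.mem_iff.1 hve with hv1 | hv1 <;> rcases Sym2.mem_iff.1 hvf with hv2 | hv2
      · exact absurd (hv1.symm.trans hv2) hxy'
      · exact absurd (hv2.symm.trans hv1) hd2x
      · exact absurd (hv1.symm.trans hv2) hc2y
      · rw [he', hf', evB3, evB5, hcb, hcd]
        exact keyc b1 b2 C2 D2 hadj2 hadj4 hd22' (Subtype.ext (hv1.symm.trans hv2))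
    · rw [he'] at hve
      rcases Sym2.mem_iff.1 hve with hv | hv
      · exact absurd hv (hfp v hvf).1
      · rw [he', evB3, hcb]
        exact key_sp b1 C2 f hadj2 hf hfp (by show c2 ∈ f; rw [← hv]; exact hvf)
    -- e = yd1
    · rw [he', hf', evB4, evB1]; exact hεg.symm
    · rw [he'] at hve; rw [hf'] at hvf
      rcases Sym2.mem_iff.1 hve with hv1 | hv1 <;> rcases Sym2.mem_iff.1 hvf with hv2 | hv2
      · exact absurd (hv2.symm.trans hv1) hxy'
      · exact absurd (hv2.symm.trans hv1) hc1y
      · exact absurd (hv1.symm.trans hv2) hd1x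
      · rw [he', hf', evB4, evB2, hcg, hca]
        exact (keyc a1 a2 C1 D1 hadj1 hadj3 hd12' (Subtype.ext (hv2.symm.trans hv1))).symm
    · rw [he'] at hve; rw [hf'] at hvf
      rcases Sym2.mem_iff.1 hve with hv1 | hv1 <;> rcases Sym2.mem_iff.1 hvf with hv2 | hv2
      · exact absurd (hv2.symm.trans hv1) hxy'
      · exact absurd (hv2.symm.trans hv1) hc2y
      · exact absurd (hv1.symm.trans hv2) hd1x
      · rw [he', hf', evB4, evB3, hcg, hcb]
        exact (keyc b1 a2 C2 D1 hadj2 hadj3 hd21' (Subtype.ext (hv2.symm.trans hv1))).symm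
    · exact absurd (he'.trans hf'.symm) hef
    · rw [he', hf', evB4, evB5]; exact hgd'
    · rw [he'] at hve
      rcases Sym2.mem_iff.1 hve with hv | hv
      · exact absurd hv (hfp v hvf).2
      · rw [he', evB4, hcg]
        exact key_sp a2 D1 f hadj3 hf hfp (by show d1 ∈ f; rw [← hv]; exact hvf)
    -- e = yd2
    · rw [he', hf', evB5, evB1]; exact hεd.symm
    · rw [he'] at hve; rw [hf'] at hvf
      rcases Sym2.mem_iff.1 hve with hv1 | hv1 <;> rcases Sym2.mem_iff.1 hvf with hv2 | hv2
      · exact absurd (hv2.symm.trans hv1) hxy'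
      · exact absurd (hv2.symm.trans hv1) hc1y
      · exact absurd (hv1.symm.trans hv2) hd2x
      · rw [he', hf', evB5, evB2, hcd, hca]
        exact (keyc a1 b2 C1 D2 hadj1 hadj4 hd12'' (Subtype.ext (hv2.symm.trans hv1))).symm
    · rw [he'] at hve; rw [hf'] at hvf
      rcases Sym2.mem_iff.1 hve with hv1 | hv1 <;> rcases Sym2.mem_iff.1 hvf with hv2 | hv2
      · exact absurd (hv2.symm.trans hv1) hxy'
      · exact absurd (hv2.symm.trans hv1) hc2y
      · exact absurd (hv1.symm.trans hv2) hd2x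
      · rw [he', hf', evB5, evB3, hcd, hcb]
        exact (keyc b1 b2 C2 D2 hadj2 hadj4 hd22' (Subtype.ext (hv2.symm.trans hv1))).symm
    · rw [he', hf', evB5, evB4]; exact hgd'.symm
    · exact absurd (he'.trans hf'.symm) hef
    · rw [he'] at hve
      rcases Sym2.mem_iff.1 hve with hv | hv
      · exact absurd hv (hfp v hvf).2
      · rw [he', evB5, hcd]
        exact key_sp b2 D2 f hadj4 hf hfp (by show d2 ∈ f; rw [← hv]; exact hvf)
    -- e plain
    · rw [hf'] at hvf
      rcases Sym2.mem_iff.1 hvf with hv | hv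
      · exact absurd hv (hep v hve).1
      · exact absurd hv (hep v hve).2
    · rw [hf'] at hvf
      rcases Sym2.mem_iff.1 hvf with hv | hv
      · exact absurd hv (hep v hve).1
      · rw [hf', evB2, hca]
        exact (key_sp a1 C1 e hadj1 he hep (by show c1 ∈ e; rw [← hv]; exact hve)).symm
    · rw [hf'] at hvf
      rcases Sym2.mem_iff.1 hvf with hv | hv
      · exact absurd hv (hep v hve).1
      · rw [hf', evB3, hcb]
        exact (key_sp b1 C2 e hadj2 he hep (by show c2 ∈ e; rw [← hv]; exact hve)).symm
    · rw [hf'] at hvf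
      rcases Sym2.mem_iff.1 hvf with hv | hv
      · exact absurd hv (hep v hve).2
      · rw [hf', evB4, hcg]
        exact (key_sp a2 D1 e hadj3 he hep (by show d1 ∈ e; rw [← hv]; exact hve)).symm
    · rw [hf'] at hvf
      rcases Sym2.mem_iff.1 hvf with hv | hv
      · exact absurd hv (hep v hve).2
      · rw [hf', evB5, hcd]
        exact (key_sp b2 D2 e hadj4 he hep (by show d2 ∈ e; rw [← hv]; exact hve)).symm
    · obtain ⟨p, hp, rfl⟩ := edge_rep he hve
      obtain ⟨q, hq, rfl⟩ := edge_rep hf hvf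
      have hv0 := hep v (Sym2.mem_mk_left _ _)
      have hp0 := hep p (Sym2.mem_mk_right _ _)
      have hq0 := hfp q (Sym2.mem_mk_right _ _)
      obtain ⟨pe1, pe2, pe3, pe4, pe5⟩ := plain_ne1 _ hep
      obtain ⟨pf1, pf2, pf3, pf4, pf5⟩ := plain_ne1 _ hfp
      rw [evB6 _ pe1 pe2 pe3 pe4 pe5, evB6 _ pf1 pf2 pf3 pf4 pf5, Sym2.map_pair_eq,
        Sym2.map_pair_eq, hembr v hv0, hembr p hp0, hembr q hq0]
      refine hc _ ((SimpleGraph.mem_edgeSet _).2 ((adj_rr ⟨v, hv0⟩ ⟨p, hp0⟩).2 hp)) _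
        ((SimpleGraph.mem_edgeSet _).2 ((adj_rr ⟨v, hv0⟩ ⟨q, hq0⟩).2 hq)) ?_
        ⟨Sum.inr ⟨v, hv0⟩, Sym2.mem_mk_left _ _, Sym2.mem_mk_left _ _⟩
      intro h
      rcases Sym2.eq_iff.1 h with ⟨-, hh⟩ | ⟨-, hh⟩
      · have hpq : p = q := congrArg Subtype.val (Sum.inr.inj hh)
        exact hef (by rw [hpq])
      · exact absurd (congrArg Subtype.val (Sum.inr.inj hh)) hp.ne'
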